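/- arXiv:2202.11666 — 3 statements merged into one kernel-verified Lean document; each statement's English description precedes it below -/
import Mathlib

section
/- Let q ≥ 1 and k ≥ 1. For indices i₁, …, i_{2k} ∈ {0, 1, …, q}, the trace of the product ∏_{r=1}^{k} (B_{i_{2r−1}} · E · B_{i_{2r}}) in M_{2^q}(ℂ) (i.e. the trace of B_{i₁} E B_{i₂} B_{i₃} E B_{i₄} ⋯ B_{i_{2k−1}} E B_{i_{2k}}) equals 1 if i_{2k} = i₁ and i_{2r} = i_{2r+1} for every r = 1, …, k−1, and equals 0 otherwise. -/
open Matrix BigOperators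

/-- The 2×2 flip matrix `J = [[0,1],[1,0]]`. -/
noncomputable def J2 : Matrix (Fin 2) (Fin 2) ℂ := !![0, 1; 1, 0]

/-- The 2×2 matrix unit `E₁₁ = [[1,0],[0,0]]`. -/
noncomputable def E11 : Matrix (Fin 2) (Fin 2) ℂ := !![1, 0; 0, 0]

/-- `Bq q i` for `i = 1,…,q` is the Kronecker product with `J` in the `i`-th tensor factor and
the identity elsewhere; `Bq q 0` is the identity of `M_{2^q}(ℂ)`.  Here `M_{2^q}(ℂ)` is realized
as matrices indexed by `Fin q → Fin 2`, and the Kronecker product entrywise is the product of the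
entries of the factors. -/
noncomputable def Bq (q : ℕ) (i : Fin (q + 1)) :
    Matrix (Fin q → Fin 2) (Fin q → Fin 2) ℂ :=
  Matrix.of fun s t => ∏ j : Fin q,
    (if ((j : ℕ) + 1 = (i : ℕ)) then J2 else (1 : Matrix (Fin 2) (Fin 2) ℂ)) (s j) (t j)

/-- `Etens q = E₁₁^{⊗q}`. -/
noncomputable def Etens (q : ℕ) : Matrix (Fin q → Fin 2) (Fin q → Fin 2) ℂ :=
  Matrix.of fun s t => ∏ j : Fin q, E11 (s j) (t j)

/-!
`E = e₀ e₀ᵀ`, and each `B_i` is a symmetric permutation matrix sending `e₀` to a basis vector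
`e_{v_i}` with `i ↦ v_i` injective. Hence `B_a E B_b` is the matrix unit `e_{v_a v_b}`, the product
`e_{v_{i₁} v_{i₂}} e_{v_{i₃} v_{i₄}} ⋯` telescopes to `e_{v_{i₁} v_{i_{2k}}}` when every inner pair of
indices agrees and vanishes otherwise, and `tr e_{uv} = δ_{uv}`.
-/

section MatrixUnits

variable {n α : Type*} [Fintype n] [DecidableEq n]

theorem Matrix.trace_single [AddCommMonoid α] (a b : n) (c : α) :
    trace (single a b c) = if a = b then c else 0 := by
  split_ifs with h
  · exact h ▸ trace_single_eq_same a c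
  · exact trace_single_eq_of_ne a b c h

theorem Matrix.mul_single_mul_apply [NonUnitalNonAssocSemiring α] {m l : Type*} [Fintype m]
    (A : Matrix l n α) (B : Matrix n m α) (a b : n) (c : α) (s : l) (t : m) :
    (A * single a b c * B) s t = A s a * c * B b t := by
  rw [mul_apply, Finset.sum_eq_single b]
  · rw [mul_single_apply_same]
  · intro x _ hx
    rw [mul_single_apply_of_ne _ _ _ _ _ hx, zero_mul]
  · exact fun h => absurd (Finset.mem_univ b) h

theorem Matrix.list_prod_ofFn_single_one [Semiring α] (c : ℕ → n) (k : ℕ) :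
    (List.ofFn fun r : Fin (k + 1) =>
        single (c (2 * (r : ℕ) + 1)) (c (2 * (r : ℕ) + 2)) (1 : α)).prod
      = if ∀ r ∈ Finset.Icc 1 k, c (2 * r) = c (2 * r + 1)
        then single (c 1) (c (2 * (k + 1))) 1 else 0 := by
  induction k with
  | zero => simp
  | succ k ih =>
    rw [List.ofFn_succ', List.concat_eq_append, List.prod_append, List.prod_singleton]
    simp only [Fin.val_castSucc, Fin.val_last]
    rw [ih, ← Finset.insert_Icc_right_eq_Icc_add_one (by omega)]
    simp only [Finset.forall_mem_insert]
    by_cases hP : ∀ r ∈ Finset.Icc 1 k, c (2 * r) = c (2 * r + 1)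
    · by_cases hlink : c (2 * (k + 1)) = c (2 * (k + 1) + 1)
      · rw [if_pos hP, if_pos ⟨hlink, hP⟩, hlink, single_mul_single_same, one_mul]
        rfl
      · rw [if_pos hP, if_neg (hlink ·.1), single_mul_single_of_ne (h := hlink)]
    · rw [if_neg hP, if_neg (hP ·.2), zero_mul]

end MatrixUnits

/-- `Bq q i` maps the basis vector `e₀` to `e_{flipIndex q i}`. -/
def flipIndex (q : ℕ) (i : Fin (q + 1)) : Fin q → Fin 2 :=
  fun j => if (j : ℕ) + 1 = (i : ℕ) then 1 else 0

theorem flipIndex_injective (q : ℕ) : Function.Injective (flipIndex q) := by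
  intro a b h
  wlog ha : (a : ℕ) ≠ 0 generalizing a b
  · by_contra hab
    exact hab (this h.symm (by omega)).symm
  have h_at := congrFun h ⟨a - 1, by omega⟩
  simp only [flipIndex] at h_at
  rw [if_pos (by omega)] at h_at
  split_ifs at h_at with hb
  · exact Fin.ext (by omega)
  · exact absurd h_at (by decide)

theorem E11_eq_single : E11 = single 0 0 1 := by
  ext x y
  fin_cases x <;> fin_cases y <;> rfl

theorem Etens_eq_single (q : ℕ) : Etens q = single 0 0 1 := by
  ext s t
  simp only [Etens, E11_eq_single, of_apply, single_apply, Finset.prod_boole, funext_iff,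
    Pi.zero_apply, Finset.mem_univ, forall_const, forall_and]

theorem Bq_isSymm (q : ℕ) (i : Fin (q + 1)) : (Bq q i).IsSymm := by
  have hJ2 : J2.IsSymm := by
    ext x y
    fin_cases x <;> fin_cases y <;> rfl
  refine IsSymm.ext fun s t => ?_
  simp only [Bq, of_apply]
  refine Finset.prod_congr rfl fun j _ => ?_
  split_ifs
  · exact hJ2.apply _ _
  · exact isSymm_one.apply _ _

theorem Bq_apply_zero_right (q : ℕ) (i : Fin (q + 1)) (s : Fin q → Fin 2) :
    Bq q i s 0 = if s = flipIndex q i then 1 else 0 := by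
  have factor (j : Fin q) (x : Fin 2) :
      (if (j : ℕ) + 1 = (i : ℕ) then J2 else 1) x 0 = if x = flipIndex q i j then 1 else 0 := by
    unfold flipIndex
    split_ifs <;> fin_cases x <;> simp_all [J2, one_apply]
  simp only [Bq, of_apply, Pi.zero_apply, factor, Finset.prod_boole, Finset.mem_univ,
    forall_const, funext_iff]

theorem Bq_mul_Etens_mul_Bq (q : ℕ) (a b : Fin (q + 1)) :
    Bq q a * Etens q * Bq q b = single (flipIndex q a) (flipIndex q b) 1 := by
  ext s t
  rw [Etens_eq_single, mul_single_mul_apply, Bq_apply_zero_right, (Bq_isSymm q b).apply t 0,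
    Bq_apply_zero_right, single_apply]
  split_ifs <;> simp_all [eq_comm]

open scoped Classical in
theorem trace_of_alternating_product_general (q k : ℕ) (hk : 1 ≤ k)
    (i : ℕ → Fin (q + 1)) :
    Matrix.trace
      ((List.ofFn fun r : Fin k =>
        Bq q (i (2 * (r : ℕ) + 1)) * Etens q * Bq q (i (2 * (r : ℕ) + 2))).prod)
    = if (i (2 * k) = i 1 ∧ ∀ r ∈ Finset.Icc 1 (k - 1), i (2 * r) = i (2 * r + 1))
      then 1 else 0 := by
  obtain ⟨k, rfl⟩ := Nat.exists_eq_add_of_le' hk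
  simp only [Bq_mul_Etens_mul_Bq, list_prod_ofFn_single_one (fun r => flipIndex q (i r)),
    apply_ite trace, trace_single, trace_zero, (flipIndex_injective q).eq_iff, Nat.add_sub_cancel]
  rw [← ite_and]
  exact if_congr (and_comm.trans (and_congr_left' eq_comm)) rfl rfl

open scoped Classical in
/-- The trace of `B_{i₁} E B_{i₂} B_{i₃} E B_{i₄} ⋯ B_{i_{2k−1}} E B_{i_{2k}}` equals `1` if
`i_{2k} = i₁` and `i_{2r} = i_{2r+1}` for every `r = 1,…,k−1`, and equals `0` otherwise. -/
theorem trace_of_alternating_product (q k : ℕ) (hq : 1 ≤ q) (hk : 1 ≤ k)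
    (i : ℕ → Fin (q + 1)) :
    Matrix.trace
      ((List.ofFn fun r : Fin k =>
        Bq q (i (2 * (r : ℕ) + 1)) * Etens q * Bq q (i (2 * (r : ℕ) + 2))).prod)
    = if (i (2 * k) = i 1 ∧ ∀ r ∈ Finset.Icc 1 (k - 1), i (2 * r) = i (2 * r + 1))
      then 1 else 0 :=
  trace_of_alternating_product_general q k hk i
end

section
/- (The ideal J annihilates the cyclic monotone product.) Let C be a unital ℂ-algebra, let A be a subalgebra and B a unital subalgebra of C, and let ω, τ : C → ℂ be linear maps satisfying the cyclic monotone factorization rule: for every m ≥ 1, a₁, …, a_m ∈ A, and c₀, c₁, …, c_m ∈ B, ω(c₀ a₁ c₁ a₂ c₂ ⋯ a_m c_m) = ω(a₁ ⋯ a_m) τ(c₁) ⋯ τ(c_{m−1}) τ(c_m c₀). Let x = c₀ a₁ c₁ ⋯ a_n c_n with n ≥ 2, a₁,…,a_n ∈ A, c₀,…,c_n ∈ B, and τ(c_r) = 0 for every r = 1, …, n−1. Then ω(x) = 0, and moreover ω(x y) = 0 and ω(y x) = 0 for every element y of the form y = c′₀ a′₁ c′₁ ⋯ a′_m c′_m with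 m ≥ 1, a′₁,…,a′_m ∈ A and c′₀,…,c′_m ∈ B. -/
/-!
Both `x y` and `y x` are again alternating words, of length `n + m`, in which the separator
`c₁` of `x` survives as an inner separator (at position `1`, resp. `m + 1`): gluing only merges
the last separator of the left factor with the first one of the right factor. The cyclic
monotone factorization of such a word contains the factor `τ(c₁) = 0`.
-/

section Concat

variable {α : Type*}

def concatLetters (n : ℕ) (a a' : ℕ → α) (r : ℕ) : α :=
  if r ≤ n then a r else a' (r - n)

def concatSeparators [Mul α] (n : ℕ) (c c' : ℕ → α) (r : ℕ) : α :=
  if r < n then c r else if r = n then c n * c' 0 else c' (r - n)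

variable {S : Type*} [SetLike S α]

lemma concatLetters_mem {s : S} {n : ℕ} {a a' : ℕ → α} (ha : ∀ r, a r ∈ s)
    (ha' : ∀ r, a' r ∈ s) (r : ℕ) : concatLetters n a a' r ∈ s := by
  unfold concatLetters
  split_ifs
  exacts [ha r, ha' _]

lemma concatSeparators_mem [Mul α] [MulMemClass S α] {s : S} {n : ℕ} {c c' : ℕ → α}
    (hc : ∀ r, c r ∈ s) (hc' : ∀ r, c' r ∈ s) (r : ℕ) : concatSeparators n c c' r ∈ s := by
  unfold concatSeparators
  split_ifs
  exacts [hc r, mul_mem (hc n) (hc' 0), hc' _]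

end Concat

section AlternatingWord

variable {M : Type*} [Monoid M]

def alternatingWord (c a : ℕ → M) (n : ℕ) : M :=
  c 0 * (List.ofFn fun r : Fin n => a ((r : ℕ) + 1) * c ((r : ℕ) + 1)).prod

@[simp]
lemma alternatingWord_zero (c a : ℕ → M) : alternatingWord c a 0 = c 0 := by
  simp [alternatingWord]

lemma alternatingWord_succ (c a : ℕ → M) (n : ℕ) :
    alternatingWord c a (n + 1) = alternatingWord c a n * (a (n + 1) * c (n + 1)) := by
  simp only [alternatingWord, List.ofFn_succ', List.prod_concat, Fin.val_castSucc, Fin.val_last,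
    mul_assoc]

lemma alternatingWord_congr {c c' a a' : ℕ → M} {n : ℕ} (hc : ∀ r ≤ n, c r = c' r)
    (ha : ∀ r ≤ n, a r = a' r) : alternatingWord c a n = alternatingWord c' a' n := by
  induction n with
  | zero => simp [hc 0 le_rfl]
  | succ n ih =>
    rw [alternatingWord_succ, alternatingWord_succ, ih (fun r hr => hc r (by omega))
      (fun r hr => ha r (by omega)), hc (n + 1) le_rfl, ha (n + 1) le_rfl]

lemma alternatingWord_mul_right (c a : ℕ → M) (n : ℕ) (d : M) :
    alternatingWord c a n * d = alternatingWord (Function.update c n (c n * d)) a n := by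
  cases n with
  | zero => simp
  | succ n =>
    have hbelow : alternatingWord (Function.update c (n + 1) (c (n + 1) * d)) a n
        = alternatingWord c a n :=
      alternatingWord_congr (fun r hr => Function.update_of_ne (by omega) _ _) fun _ _ => rfl
    rw [alternatingWord_succ, alternatingWord_succ, hbelow, Function.update_self,
      mul_assoc, mul_assoc]

lemma alternatingWord_mul_alternatingWord (c a c' a' : ℕ → M) (n m : ℕ) :
    alternatingWord c a n * alternatingWord c' a' m
      = alternatingWord (concatSeparators n c c') (concatLetters n a a') (n + m) := by
  induction m with
  | zero =>
    rw [alternatingWord_zero, alternatingWord_mul_right]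
    refine alternatingWord_congr (fun r hr => ?_) fun r hr => ?_
    · rcases hr.lt_or_eq with hr | rfl
      · simp [concatSeparators, hr, hr.ne]
      · simp [concatSeparators]
    · simp [concatLetters, hr]
  | succ m ih =>
    rw [alternatingWord_succ, ← mul_assoc, ih, ← add_assoc, alternatingWord_succ]
    simp [concatLetters, concatSeparators, show ¬ n + m + 1 < n by omega,
      show n + m + 1 ≠ n by omega, show n + m + 1 - n = m + 1 by omega]

end AlternatingWord

section CyclicMonotone

variable {R C : Type*} [CommSemiring R] [Semiring C] [Algebra R C]

def CyclicMonotoneFactorization (A : NonUnitalSubalgebra R C) (B : Subalgebra R C)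
    (ω τ : C →ₗ[R] R) : Prop :=
  ∀ m : ℕ, 1 ≤ m → ∀ (a c : ℕ → C), (∀ r, a r ∈ A) → (∀ r, c r ∈ B) →
    ω (alternatingWord c a m)
      = ω ((List.ofFn fun r : Fin m => a ((r : ℕ) + 1)).prod)
        * (∏ r ∈ Finset.Icc 1 (m - 1), τ (c r)) * τ (c m * c 0)

lemma CyclicMonotoneFactorization.apply_alternatingWord_eq_zero {A : NonUnitalSubalgebra R C}
    {B : Subalgebra R C} {ω τ : C →ₗ[R] R} (h : CyclicMonotoneFactorization A B ω τ)
    {n : ℕ} {a c : ℕ → C} (ha : ∀ r, a r ∈ A) (hc : ∀ r, c r ∈ B) {k : ℕ} (hk : 1 ≤ k)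
    (hkn : k ≤ n - 1) (hτ : τ (c k) = 0) : ω (alternatingWord c a n) = 0 := by
  rw [h n (by omega) a c ha hc,
    Finset.prod_eq_zero (Finset.mem_Icc.mpr ⟨hk, hkn⟩) hτ, mul_zero, zero_mul]

end CyclicMonotone

/-- The ideal `J` annihilates the cyclic monotone product: if `ω, τ` satisfy the cyclic
monotone factorization rule for alternating words with letters from a (possibly non-unital)
subalgebra `A` and a unital subalgebra `B`, and `x = c₀ a₁ c₁ ⋯ a_n c_n` with `n ≥ 2` and
`τ(c_r) = 0` for `r = 1,…,n−1`, then `ω(x) = 0`, and `ω(xy) = ω(yx) = 0` for every alternating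
word `y = c′₀ a′₁ c′₁ ⋯ a′_m c′_m`. -/
theorem ideal_annihilates_cyclic_monotone {C : Type*} [Ring C] [Algebra ℂ C]
    (Asub : NonUnitalSubalgebra ℂ C) (Bsub : Subalgebra ℂ C) (ω τ : C →ₗ[ℂ] ℂ)
    (hcyc : ∀ m : ℕ, 1 ≤ m → ∀ (a c : ℕ → C), (∀ r, a r ∈ Asub) → (∀ r, c r ∈ Bsub) →
      ω (c 0 * (List.ofFn fun r : Fin m => a ((r : ℕ) + 1) * c ((r : ℕ) + 1)).prod)
        = ω ((List.ofFn fun r : Fin m => a ((r : ℕ) + 1)).prod)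
          * (∏ r ∈ Finset.Icc 1 (m - 1), τ (c r)) * τ (c m * c 0))
    (n : ℕ) (hn : 2 ≤ n) (a c : ℕ → C)
    (ha : ∀ r, a r ∈ Asub) (hc : ∀ r, c r ∈ Bsub)
    (hτc : ∀ r, 1 ≤ r → r ≤ n - 1 → τ (c r) = 0) :
    ω (c 0 * (List.ofFn fun r : Fin n => a ((r : ℕ) + 1) * c ((r : ℕ) + 1)).prod) = 0 ∧
    ∀ m : ℕ, 1 ≤ m → ∀ (a' c' : ℕ → C), (∀ r, a' r ∈ Asub) → (∀ r, c' r ∈ Bsub) →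
      ω ((c 0 * (List.ofFn fun r : Fin n => a ((r : ℕ) + 1) * c ((r : ℕ) + 1)).prod)
          * (c' 0 * (List.ofFn fun r : Fin m => a' ((r : ℕ) + 1) * c' ((r : ℕ) + 1)).prod))
        = 0 ∧
      ω ((c' 0 * (List.ofFn fun r : Fin m => a' ((r : ℕ) + 1) * c' ((r : ℕ) + 1)).prod)
          * (c 0 * (List.ofFn fun r : Fin n => a ((r : ℕ) + 1) * c ((r : ℕ) + 1)).prod))
        = 0 := by
  have hrule : CyclicMonotoneFactorization Asub Bsub ω τ := hcyc
  have hτ₁ : τ (c 1) = 0 := hτc 1 le_rfl (by omega)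
  refine ⟨hrule.apply_alternatingWord_eq_zero ha hc le_rfl (by omega) hτ₁,
    fun m hm a' c' ha' hc' => ⟨?_, ?_⟩⟩
  · change ω (alternatingWord c a n * alternatingWord c' a' m) = 0
    rw [alternatingWord_mul_alternatingWord]
    refine hrule.apply_alternatingWord_eq_zero (concatLetters_mem ha ha')
      (concatSeparators_mem hc hc') le_rfl (by omega) ?_
    rwa [concatSeparators, if_pos (by omega)]
  · change ω (alternatingWord c' a' m * alternatingWord c a n) = 0
    rw [alternatingWord_mul_alternatingWord]
    refine hrule.apply_alternatingWord_eq_zero (concatLetters_mem ha' ha)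
      (concatSeparators_mem hc' hc) (k := m + 1) (by omega) (by omega) ?_
    rwa [concatSeparators, if_neg (by omega), if_neg (by omega), Nat.add_sub_cancel_left]
end

section
/- (Explicit moment formula in the monotone case.) Let C be a unital ℂ-algebra, B ⊆ C a unital subalgebra, ω̃, τ : C → ℂ linear, a₁,…,a_p ∈ C, and b₀ = 1, b₁,…,b_q ∈ B with τ(1) = 1, τ(b_i) = 0 (1 ≤ i ≤ q), τ(b_i b_j) = δ_{ij} (1 ≤ i,j ≤ q), satisfying the monotone factorization rule: for every m ≥ 1, j₁,…,j_m ∈ {1,…,p} and c₀,…,c_m ∈ B, ω̃(c₀ a_{j₁} c₁ ⋯ a_{j_m} c_m) = ω̃(a_{j₁} ⋯ a_{j_m}) τ(c₀) τ(c₁) ⋯ τ(c_m). For coefficients λ_{i₁,i₂,j} ∈ ℂ set P = Σ_{i₁,i₂=0}^{q} Σ_{j=1}^{p} λ_{i₁,i₂,j} b_{i₁} a_j b_{i₂}. Then for every k ≥ 2, ω̃(P^k) = Σ_{i₂,i₄,…,i_{2k−2}=0}^{q} Σ_{j₁,…,j_k=1}^{p} λ_{0,i₂,j₁} (∏_{r=2}^{k−1}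 λ_{i_{2r−2}, i_{2r}, j_r}) λ_{i_{2k−2},0,j_k} ω̃(a_{j₁} ⋯ a_{j_k}). -/
/-!
Expanding `P ^ k` noncommutatively gives a sum of words
`b_{i₁} a_{j₁} b_{i₁'} ⋯ b_{i_k} a_{j_k} b_{i_k'}`. Regrouped as `c₀ a_{j₁} c₁ ⋯ a_{j_k} c_k` with
links `c₀ = b_{i₁}`, `c_r = b_{i_r'} b_{i_{r+1}}`, `c_k = b_{i_k'}`, the monotone rule factors out
`ω̃(a_{j₁} ⋯ a_{j_k})`. Since `b₀ = 1`, the relations on `τ` say `τ(b_i b_{i'}) = δ_{i i'}` for all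
`i, i'`, so `∏ τ(c_r)` is the indicator that the outer indices vanish and each `i_r'` equals
`i_{r+1}`; summing it out leaves one free index per inner link.
-/

theorem sum_pow_eq_sum_prod_ofFn {R ι : Type*} [Semiring R] [Fintype ι] (g : ι → R) (n : ℕ) :
    (∑ i, g i) ^ n = ∑ f : Fin n → ι, (List.ofFn fun r => g (f r)).prod := by
  induction n with
  | zero => simp
  | succ n ih =>
    rw [pow_succ', ih, Finset.sum_mul_sum, ← Fintype.sum_prod_type',
      ← (Fin.consEquiv fun _ => ι).sum_comp]
    simp [Fin.consEquiv, List.ofFn_succ]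

theorem sum_sum_sum_pow_eq_sum_prod_ofFn {R ι₁ ι₂ ι₃ : Type*} [Semiring R]
    [Fintype ι₁] [Fintype ι₂] [Fintype ι₃]
    (g : ι₁ → ι₂ → ι₃ → R) (n : ℕ) :
    (∑ x, ∑ y, ∑ z, g x y z) ^ n
      = ∑ f₁ : Fin n → ι₁, ∑ f₂ : Fin n → ι₂, ∑ f₃ : Fin n → ι₃,
          (List.ofFn fun r => g (f₁ r) (f₂ r) (f₃ r)).prod := by
  simp only [← Fintype.sum_prod_type']
  rw [sum_pow_eq_sum_prod_ofFn]
  exact Fintype.sum_equiv ((Equiv.arrowProdEquivProdArrow _ _ _).trans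
    ((Equiv.refl _).prodCongr (Equiv.arrowProdEquivProdArrow _ _ _))) _ _ fun f => rfl

theorem prod_ofFn_smul {R A : Type*} [CommSemiring R] [Semiring A] [Algebra R A] {n : ℕ}
    (c : Fin n → R) (m : Fin n → A) :
    (List.ofFn fun r => c r • m r).prod = (∏ r, c r) • (List.ofFn m).prod := by
  induction n with
  | zero => simp
  | succ n ih =>
    rw [List.ofFn_succ, List.ofFn_succ, List.prod_cons, List.prod_cons,
      ih (fun r => c r.succ) (fun r => m r.succ), Fin.prod_univ_succ, smul_mul_smul_comm]

theorem prod_ofFn_mul_mul_eq {M : Type*} [Monoid M] {k : ℕ} (u w : Fin (k + 1) → M)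
    (v : Fin k → M) :
    w 0 * (List.ofFn fun r => u r.castSucc * v r * w r.succ).prod * u (Fin.last k)
      = w 0 * u 0 * (List.ofFn fun r => v r * (w r.succ * u r.succ)).prod := by
  induction k with
  | zero => simp
  | succ k ih =>
    have tail := ih (fun s => u s.succ) (fun s => w s.succ) (fun r => v r.succ)
    simp only [Fin.succ_last, Fin.succ_castSucc] at tail
    simp only [List.ofFn_succ, List.prod_cons, Fin.castSucc_zero, mul_assoc] at tail ⊢
    rw [tail]

theorem Fin.prod_univ_cons_snoc {α M : Type*} [CommMonoid M] {e : ℕ}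
    (L : Fin (e + 2) → α → α → M) (x : α) (ii : Fin (e + 1) → α) :
    ∏ r, L r ((Fin.cons x ii : Fin (e + 2) → α) r) ((Fin.snoc ii x : Fin (e + 2) → α) r)
      = L 0 x (ii 0) * (∏ t : Fin e, L t.succ.castSucc (ii t.castSucc) (ii t.succ))
        * L (Fin.last (e + 1)) (ii (Fin.last e)) x := by
  have h0 : (Fin.snoc ii x : Fin (e + 2) → α) 0 = ii 0 := Fin.snoc_castSucc (α := fun _ => α) x ii 0
  rw [Fin.prod_univ_succ]
  simp only [Fin.cons_zero, Fin.cons_succ, h0]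
  rw [Fin.prod_univ_castSucc, mul_assoc]
  simp only [Fin.succ_castSucc, Fin.snoc_castSucc, Fin.succ_last, Fin.snoc_last]

theorem Fintype.sum_ite_cons_eq_snoc {α R : Type*} [Fintype α] [DecidableEq α]
    [AddCommMonoid R] (x : α) (n : ℕ) (F : (Fin (n + 1) → α) → (Fin (n + 1) → α) → R) :
    ∑ u : Fin (n + 1) → α, ∑ v : Fin (n + 1) → α,
        (if Fin.cons x v = (Fin.snoc u x : Fin (n + 2) → α) then F u v else 0)
      = ∑ w : Fin n → α, F (Fin.cons x w) (Fin.snoc w x) := by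
  rw [← (Fin.consEquiv fun _ => α).sum_comp, Fintype.sum_prod_type]
  simp only [Fin.consEquiv, Equiv.coe_fn_mk, ← Fin.cons_snoc_eq_snoc_cons, Fin.cons_inj]
  rw [Finset.sum_comm]
  simp [Finset.sum_ite_eq, ite_and]

theorem apply_mul_eq_ite {ι M R : Type*} [DecidableEq ι] [MulOneClass M] [Zero R] [One R]
    (τ : M → R) (b : ι → M) (o : ι) (hb : b o = 1) (hτ1 : τ 1 = 1)
    (hτb : ∀ i, i ≠ o → τ (b i) = 0)
    (hτbb : ∀ i j, i ≠ o → j ≠ o → τ (b i * b j) = if i = j then 1 else 0) (i j : ι) :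
    τ (b i * b j) = if i = j then 1 else 0 := by
  rcases eq_or_ne i o with rfl | hi
  · rcases eq_or_ne j i with rfl | hj
    · simp [hb, hτ1]
    · simp [hb, hτb j hj, hj.symm]
  · rcases eq_or_ne j o with rfl | hj
    · simp [hb, hτb i hi, hi]
    · exact hτbb i j hi hj

section MonotoneFactorization

variable {R C κ : Type*} [CommSemiring R] [Semiring C] [Algebra R C] {B : Subalgebra R C}
  {ωt τ : C → R} {a : κ → C}
  (hmono : ∀ m : ℕ, 1 ≤ m → ∀ (j : ℕ → κ) (c : ℕ → C), (∀ r, c r ∈ B) →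
      ωt (c 0 * (List.ofFn fun r : Fin m => a (j ((r : ℕ) + 1)) * c ((r : ℕ) + 1)).prod)
        = ωt ((List.ofFn fun r : Fin m => a (j ((r : ℕ) + 1))).prod)
          * ∏ r ∈ Finset.range (m + 1), τ (c r))
include hmono

open Fin.NatCast in
theorem apply_mul_prod_ofFn_eq_of_monotone {m : ℕ} (j : Fin (m + 1) → κ) (c : Fin (m + 2) → C)
    (hc : ∀ s, c s ∈ B) :
    ωt (c 0 * (List.ofFn fun r => a (j r) * c r.succ).prod)
      = ωt ((List.ofFn fun r => a (j r)).prod) * ∏ s, τ (c s) := by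
  have h := hmono (m + 1) m.succ_pos (fun n => j ((n - 1 : ℕ) : Fin (m + 1)))
    (fun n => c (n : Fin (m + 2))) (fun _ => hc _)
  simpa [Finset.prod_range] using h

theorem apply_prod_ofFn_sandwich_eq_ite {ι : Type*} [DecidableEq ι] {b : ι → C} {o : ι}
    (hb : b o = 1) (hbB : ∀ i, b i ∈ B) (hτ : ∀ i i', τ (b i * b i') = if i = i' then 1 else 0)
    {k : ℕ} (i₁ i₂ : Fin (k + 1) → ι) (j : Fin (k + 1) → κ) :
    ωt ((List.ofFn fun r => b (i₁ r) * a (j r) * b (i₂ r)).prod)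
      = if (Fin.cons o i₂ : Fin (k + 2) → ι) = Fin.snoc i₁ o
        then ωt ((List.ofFn fun r => a (j r)).prod) else 0 := by
  set iR : Fin (k + 2) → ι := Fin.snoc i₁ o
  set iL : Fin (k + 2) → ι := Fin.cons o i₂
  have hword : (List.ofFn fun r => b (i₁ r) * a (j r) * b (i₂ r)).prod
      = b (iL 0) * (List.ofFn fun r => b (iR r.castSucc) * a (j r) * b (iL r.succ)).prod
        * b (iR (Fin.last _)) := by
    simp [iL, iR, hb]
  -- `b (iL s) * b (iR s)` is the `s`-th link of the word, padded by `b o = 1` at both ends.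
  rw [hword, prod_ofFn_mul_mul_eq (fun s => b (iR s)) (fun s => b (iL s)),
    apply_mul_prod_ofFn_eq_of_monotone hmono j (fun s => b (iL s) * b (iR s))
      (fun s => B.mul_mem (hbB _) (hbB _))]
  simp only [hτ, Fintype.prod_boole, ← funext_iff, mul_ite, mul_one, mul_zero]

end MonotoneFactorization

/-- Explicit moment formula in the monotone case: with
`P = Σ_{i₁,i₂=0}^{q} Σ_{j=1}^{p} λ_{i₁,i₂,j} b_{i₁} a_j b_{i₂}`, for every `k = e + 2 ≥ 2`,
`ω̃(P^k) = Σ_{i₂,i₄,…,i_{2k−2}} Σ_{j₁,…,j_k} λ_{0,i₂,j₁}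
(∏_{r=2}^{k−1} λ_{i_{2r−2},i_{2r},j_r}) λ_{i_{2k−2},0,j_k} ω̃(a_{j₁} ⋯ a_{j_k})`
(the even-position indices `i₂,…,i_{2k−2}` are encoded as `ii : Fin (k−1) → Fin (q+1)` with
`ii s = i_{2(s+1)}`, and the `j`'s as `jj : Fin k → Fin p`). -/
theorem moment_formula_monotone {C : Type*} [Ring C] [Algebra ℂ C]
    (Bsub : Subalgebra ℂ C) (ωt τ : C →ₗ[ℂ] ℂ)
    (p q : ℕ) (a : Fin p → C) (b : Fin (q + 1) → C)
    (hb0 : b 0 = 1) (hbB : ∀ i, b i ∈ Bsub)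
    (hτ1 : τ 1 = 1)
    (hτb : ∀ i : Fin (q + 1), i ≠ 0 → τ (b i) = 0)
    (hτbb : ∀ i j : Fin (q + 1), i ≠ 0 → j ≠ 0 →
      τ (b i * b j) = if i = j then 1 else 0)
    (hmono : ∀ m : ℕ, 1 ≤ m → ∀ (j : ℕ → Fin p) (c : ℕ → C), (∀ r, c r ∈ Bsub) →
      ωt (c 0 * (List.ofFn fun r : Fin m => a (j ((r : ℕ) + 1)) * c ((r : ℕ) + 1)).prod)
        = ωt ((List.ofFn fun r : Fin m => a (j ((r : ℕ) + 1))).prod)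
          * ∏ r ∈ Finset.range (m + 1), τ (c r))
    (lam : Fin (q + 1) → Fin (q + 1) → Fin p → ℂ)
    (e : ℕ) :
    ωt ((∑ i₁ : Fin (q + 1), ∑ i₂ : Fin (q + 1), ∑ j : Fin p,
          lam i₁ i₂ j • (b i₁ * a j * b i₂)) ^ (e + 2))
      = ∑ ii : Fin (e + 1) → Fin (q + 1), ∑ jj : Fin (e + 2) → Fin p,
          lam 0 (ii 0) (jj 0)
            * (∏ t : Fin e, lam (ii t.castSucc) (ii t.succ) (jj t.succ.castSucc))
            * lam (ii (Fin.last e)) 0 (jj (Fin.last (e + 1)))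
            * ωt ((List.ofFn fun r : Fin (e + 2) => a (jj r)).prod) := by
  have hτ := apply_mul_eq_ite τ b 0 hb0 hτ1 hτb hτbb
  set Ω : (Fin (e + 2) → Fin p) → ℂ := fun jj => ωt ((List.ofFn fun r => a (jj r)).prod)
  calc _ = ∑ i₁ : Fin (e + 2) → Fin (q + 1), ∑ i₂ : Fin (e + 2) → Fin (q + 1),
        ∑ jj : Fin (e + 2) → Fin p, (∏ r, lam (i₁ r) (i₂ r) (jj r)) *
          ωt ((List.ofFn fun r => b (i₁ r) * a (jj r) * b (i₂ r)).prod) := by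
        simp only [sum_sum_sum_pow_eq_sum_prod_ofFn, map_sum, prod_ofFn_smul, map_smul, smul_eq_mul]
    _ = ∑ jj : Fin (e + 2) → Fin p, ∑ i₁ : Fin (e + 2) → Fin (q + 1),
        ∑ i₂ : Fin (e + 2) → Fin (q + 1),
          if (Fin.cons 0 i₂ : Fin (e + 3) → Fin (q + 1)) = Fin.snoc i₁ 0
          then (∏ r, lam (i₁ r) (i₂ r) (jj r)) * Ω jj else 0 := by
        simp only [apply_prod_ofFn_sandwich_eq_ite hmono hb0 hbB hτ, mul_ite, mul_zero]
        exact (Finset.sum_congr rfl fun i₁ _ => Finset.sum_comm).trans Finset.sum_comm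
    _ = ∑ jj : Fin (e + 2) → Fin p, ∑ ii : Fin (e + 1) → Fin (q + 1),
        (∏ r, lam ((Fin.cons 0 ii : Fin (e + 2) → Fin (q + 1)) r)
          ((Fin.snoc ii 0 : Fin (e + 2) → Fin (q + 1)) r) (jj r)) * Ω jj := by
        simp only [Fintype.sum_ite_cons_eq_snoc]
    _ = _ := by
        rw [Finset.sum_comm]
        refine Finset.sum_congr rfl fun ii _ => Finset.sum_congr rfl fun jj _ => ?_
        rw [Fin.prod_univ_cons_snoc (fun r i i' => lam i i' (jj r))]
end
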